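/- arXiv:2405.16427 — 6 statements merged into one kernel-verified Lean document; each statement's English description precedes it below -/
import Mathlib

section
/- Let G be a finite group, d ≥ d(G), and let g be a non-isolated vertex of Γ_d(G) (i.e. g lies in some generating set of size d). Then for every z ∈ G, the element g^z = z⁻¹gz lies in the same connected component of Γ_d(G) as g. -/
/-- The graph `Γ_d(G)`: distinct `x, y` are adjacent iff some generating set of
cardinality `d` contains both. -/
def genGraph (G : Type*) [Group G] (d : ℕ) : SimpleGraph G where
  Adj x y := x ≠ y ∧ ∃ s : Finset G,
    s.card = d ∧ x ∈ s ∧ y ∈ s ∧ Subgroup.closure (s : Set G) = ⊤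
  symm := by
    constructor
    rintro x y ⟨hxy, s, h1, h2, h3, h4⟩
    exact ⟨hxy.symm, s, h1, h3, h2, h4⟩
  loopless := by constructor; rintro x ⟨hx, -⟩; exact hx rfl

/-- A vertex of `Γ_d(G)` is non-isolated if it has a neighbour. -/
def NonIsolated (G : Type*) [Group G] (d : ℕ) (x : G) : Prop :=
  ∃ y, (genGraph G d).Adj x y

/-- `Δ_d(G)`: the subgraph of `Γ_d(G)` induced on the non-isolated vertices. -/
def deltaGraph (G : Type*) [Group G] (d : ℕ) :
    SimpleGraph {x : G // NonIsolated G d x} :=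
  (genGraph G d).comap Subtype.val

/-- `d(G)`: the minimal cardinality of a generating set of `G`. -/
noncomputable def minGen (G : Type*) [Group G] : ℕ :=
  sInf {n : ℕ | ∃ f : Fin n → G, Subgroup.closure (Set.range f) = ⊤}


/-!
Conjugation by any `w` is a group automorphism, hence maps generating sets of size `d` to
generating sets of size `d` and is a graph automorphism of `Γ_d(G)`. Consequently the elements `z`
with `g^z` reachable from `g` form a subgroup. If `g` lies in a generating set `s` of size `d`,
then every `t ∈ s` belongs to this subgroup: `g` and `t` are joined (both lie in `s`), so
conjugating by `t` joins `g^t` to `t^t = t`, giving `g — t — g^t`. Hence the subgroup is all of `G`.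
-/

namespace genGraph

variable {G H : Type*} [Group G] [Group H] {d : ℕ}

lemma adj_map (φ : G ≃* H) {x y : G} (h : (genGraph G d).Adj x y) :
    (genGraph H d).Adj (φ x) (φ y) := by
  obtain ⟨hxy, s, hcard, hx, hy, hs⟩ := h
  refine ⟨φ.injective.ne hxy, s.map φ.toEquiv.toEmbedding, by rw [Finset.card_map, hcard],
    Finset.mem_map_of_mem _ hx, Finset.mem_map_of_mem _ hy, ?_⟩
  rw [Finset.coe_map]
  change Subgroup.closure ((φ : G →* H) '' s) = ⊤
  rw [← MonoidHom.map_closure, hs, Subgroup.map_top_of_surjective _ φ.surjective]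

def homOfMulEquiv (φ : G ≃* H) : genGraph G d →g genGraph H d :=
  ⟨φ, adj_map φ⟩

lemma reachable_conj (w : G) {x y : G} (h : (genGraph G d).Reachable x y) :
    (genGraph G d).Reachable (w⁻¹ * x * w) (w⁻¹ * y * w) := by
  simpa [homOfMulEquiv] using h.map (homOfMulEquiv (d := d) (MulAut.conj w⁻¹))

lemma reachable_of_mem {s : Finset G} (hcard : s.card = d)
    (hs : Subgroup.closure (s : Set G) = ⊤) {x y : G} (hx : x ∈ s) (hy : y ∈ s) :
    (genGraph G d).Reachable x y := by
  by_cases hxy : x = y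
  · exact hxy ▸ SimpleGraph.Reachable.refl x
  · exact SimpleGraph.Adj.reachable ⟨hxy, s, hcard, hx, hy, hs⟩

def conjReachable (d : ℕ) (g : G) : Subgroup G where
  carrier := {z | (genGraph G d).Reachable g (z⁻¹ * g * z)}
  one_mem' := by simp
  mul_mem' {a b} ha hb := by
    have h := hb.trans (reachable_conj b ha)
    rwa [show b⁻¹ * (a⁻¹ * g * a) * b = (a * b)⁻¹ * g * (a * b) by group] at h
  inv_mem' {a} ha := by
    have h := reachable_conj a⁻¹ ha
    rw [show a⁻¹⁻¹ * (a⁻¹ * g * a) * a⁻¹ = g by group] at h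
    simpa using h.symm

lemma mem_conjReachable_of_mem {s : Finset G} (hcard : s.card = d)
    (hs : Subgroup.closure (s : Set G) = ⊤) {g t : G} (hg : g ∈ s) (ht : t ∈ s) :
    t ∈ conjReachable d g := by
  have hgt := reachable_of_mem hcard hs hg ht
  have htg : (genGraph G d).Reachable t (t⁻¹ * g * t) := by
    simpa using (reachable_conj t hgt).symm
  exact hgt.trans htg

end genGraph

theorem stmt1_general (G : Type*) [Group G] (d : ℕ)
    (g : G) (hg : NonIsolated G d g) (z : G) :
    (genGraph G d).Reachable g (z⁻¹ * g * z) := by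
  obtain ⟨-, -, s, hcard, hgs, -, hs⟩ := hg
  have hle : Subgroup.closure (s : Set G) ≤ genGraph.conjReachable d g :=
    (Subgroup.closure_le _).2 fun t ht => genGraph.mem_conjReachable_of_mem hcard hs hgs ht
  exact hle (hs ▸ Subgroup.mem_top z)

theorem stmt1 (G : Type*) [Group G] [Finite G] (d : ℕ) (hd : minGen G ≤ d)
    (g : G) (hg : NonIsolated G d g) (z : G) :
    (genGraph G d).Reachable g (z⁻¹ * g * z) :=
  stmt1_general G d g hg z
end

section
/- Let G be a finite group, d ≥ d(G), and g a vertex of Δ_d(G). Then the set G_g = {a ∈ G : g and g^a lie in the same connected component of Δ_d(G), or g = g^a} is a subgroup of G, and moreover G_g = G. -/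
/-!
Conjugation is an automorphism of `Γ_d(G)`, so "`x` and `y` lie in the same component of
`Γ_d(G)`" is a conjugation-invariant equivalence relation, and for any such relation the
elements `a` with `g^a` in the class of `g` form a subgroup. Isolated vertices of `Γ_d(G)` are
components of their own, so for a vertex `g` of `Δ_d(G)` this subgroup is `G_g`.
To see that it is all of `G`, take a generating set `s ∋ g` of size `d`; it suffices that
`g^x` is in the component of `g` for `x ∈ s`. If `g^x ∉ s`, replacing `g` by `g^x` in `s` gives
another generating set (as `g = x g^x x⁻¹`), so `g — x — g^x` is a path.
-/

open SimpleGraph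

section ConjStabilizer

variable {G : Type*} [Group G]

def Setoid.conjStabilizer (r : Setoid G)
    (hr : ∀ a x y, r x y → r (a⁻¹ * x * a) (a⁻¹ * y * a)) (g : G) : Subgroup G where
  carrier := {a | r g (a⁻¹ * g * a)}
  one_mem' := by simp
  mul_mem' {a b} ha hb := by
    have hab : r (b⁻¹ * g * b) ((a * b)⁻¹ * g * (a * b)) := by
      simpa [mul_assoc] using hr b _ _ ha
    exact r.trans hb hab
  inv_mem' {a} ha := by
    have h : r (a * g * a⁻¹) g := by
      simpa [mul_assoc] using hr a⁻¹ _ _ ha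
    simpa using r.symm h

end ConjStabilizer

section GenGraph

variable {G H : Type*} [Group G] [Group H] {d : ℕ}

theorem genGraph_adj_map (φ : G ≃* H) {x y : G} (h : (genGraph G d).Adj x y) :
    (genGraph H d).Adj (φ x) (φ y) := by
  classical
  obtain ⟨hxy, s, hcard, hx, hy, hgen⟩ := h
  refine ⟨φ.injective.ne hxy, s.map φ.toEquiv.toEmbedding, by rw [Finset.card_map, hcard],
    Finset.mem_map_of_mem _ hx, Finset.mem_map_of_mem _ hy, ?_⟩
  rw [Finset.coe_map]
  change Subgroup.closure ((φ : G →* H) '' s) = ⊤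
  rw [← MonoidHom.map_closure, hgen, Subgroup.map_equiv_top]

theorem genGraph_reachable_map (φ : G ≃* H) {x y : G} (h : (genGraph G d).Reachable x y) :
    (genGraph H d).Reachable (φ x) (φ y) :=
  h.map ⟨φ, genGraph_adj_map φ⟩

theorem genGraph_reachable_conj (a : G) {x y : G} (h : (genGraph G d).Reachable x y) :
    (genGraph G d).Reachable (a⁻¹ * x * a) (a⁻¹ * y * a) := by
  simpa [MulAut.conj_apply] using genGraph_reachable_map (MulAut.conj a⁻¹) h

theorem NonIsolated.of_mem_support {u v x : G} (hu : NonIsolated G d u)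
    (p : (genGraph G d).Walk u v) (hx : x ∈ p.support) : NonIsolated G d x := by
  induction p with
  | nil => rw [Walk.support_nil, List.mem_singleton] at hx; exact hx ▸ hu
  | cons huw p ih =>
    rw [Walk.support_cons, List.mem_cons] at hx
    exact hx.elim (· ▸ hu) (ih ⟨_, huw.symm⟩)

theorem genGraph_reachable_iff {u v : G} (hu : NonIsolated G d u) :
    (genGraph G d).Reachable u v ↔
      u = v ∨ ∃ hv : NonIsolated G d v, (deltaGraph G d).Reachable ⟨u, hu⟩ ⟨v, hv⟩ := by
  constructor
  · rintro ⟨p⟩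
    have hp : ∀ x ∈ p.support, NonIsolated G d x := fun x => hu.of_mem_support p
    exact Or.inr ⟨hp v p.end_mem_support, ⟨p.induce {x | NonIsolated G d x} hp⟩⟩
  · rintro (rfl | ⟨hv, h⟩)
    · rfl
    · exact h.map ⟨Subtype.val, id⟩

theorem closure_insert_conj_erase_eq_top [DecidableEq G] {s : Finset G} {g x : G}
    (hxs : x ∈ s) (hxg : x ≠ g) (hs : Subgroup.closure (s : Set G) = ⊤) :
    Subgroup.closure ((insert (x⁻¹ * g * x) (s.erase g) : Finset G) : Set G) = ⊤ := by
  set K := Subgroup.closure ((insert (x⁻¹ * g * x) (s.erase g) : Finset G) : Set G)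
  have hmem : ∀ z ∈ s.erase g, z ∈ K := fun z hz =>
    Subgroup.subset_closure (Finset.mem_coe.2 (Finset.mem_insert_of_mem hz))
  rw [eq_top_iff, ← hs, Subgroup.closure_le]
  intro z hz
  by_cases hzg : z = g
  · have hx : x ∈ K := hmem x (Finset.mem_erase.2 ⟨hxg, hxs⟩)
    have hconj : x⁻¹ * g * x ∈ K :=
      Subgroup.subset_closure (Finset.mem_coe.2 (Finset.mem_insert_self _ _))
    simpa [hzg, mul_assoc] using mul_mem (mul_mem hx hconj) (inv_mem hx)
  · exact hmem z (Finset.mem_erase.2 ⟨hzg, hz⟩)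

theorem genGraph_reachable_conj_of_mem {s : Finset G} {g x : G} (hcard : s.card = d)
    (hgs : g ∈ s) (hxs : x ∈ s) (hs : Subgroup.closure (s : Set G) = ⊤) :
    (genGraph G d).Reachable g (x⁻¹ * g * x) := by
  classical
  by_cases hfix : g = x⁻¹ * g * x
  · exact hfix ▸ Reachable.refl g
  by_cases hconj : x⁻¹ * g * x ∈ s
  · exact Adj.reachable ⟨hfix, s, hcard, hgs, hconj, hs⟩
  have hxg : x ≠ g := by
    rintro rfl
    exact hfix (by group)
  have hcard' : (insert (x⁻¹ * g * x) (s.erase g)).card = d := by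
    rw [Finset.card_insert_of_notMem (fun h => hconj (Finset.mem_of_mem_erase h)),
      Finset.card_erase_add_one hgs, hcard]
  have hadj_gx : (genGraph G d).Adj g x := ⟨hxg.symm, s, hcard, hgs, hxs, hs⟩
  have hadj_x_conj : (genGraph G d).Adj x (x⁻¹ * g * x) :=
    ⟨fun h => hconj (h ▸ hxs), _, hcard',
      Finset.mem_insert_of_mem (Finset.mem_erase.2 ⟨hxg, hxs⟩),
      Finset.mem_insert_self _ _, closure_insert_conj_erase_eq_top hxs hxg hs⟩
  exact hadj_gx.reachable.trans hadj_x_conj.reachable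

end GenGraph

theorem stmt2_general (G : Type*) [Group G] (d : ℕ)
    (g : G) (hg : NonIsolated G d g) :
    ∃ H : Subgroup G,
      (H : Set G) = {a : G | g = a⁻¹ * g * a ∨
        ∃ h2 : NonIsolated G d (a⁻¹ * g * a),
          (deltaGraph G d).Reachable ⟨g, hg⟩ ⟨a⁻¹ * g * a, h2⟩} ∧
      H = ⊤ := by
  refine ⟨(genGraph G d).reachableSetoid.conjStabilizer
    (fun a _ _ => genGraph_reachable_conj a) g, Set.ext fun _ => genGraph_reachable_iff hg, ?_⟩
  obtain ⟨-, -, s, hcard, hgs, -, hs⟩ := hg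
  rw [eq_top_iff, ← hs, Subgroup.closure_le]
  exact fun x hx => genGraph_reachable_conj_of_mem hcard hgs hx hs

theorem stmt2 (G : Type*) [Group G] [Finite G] (d : ℕ) (hd : minGen G ≤ d)
    (g : G) (hg : NonIsolated G d g) :
    ∃ H : Subgroup G,
      (H : Set G) = {a : G | g = a⁻¹ * g * a ∨
        ∃ h2 : NonIsolated G d (a⁻¹ * g * a),
          (deltaGraph G d).Reachable ⟨g, hg⟩ ⟨a⁻¹ * g * a, h2⟩} ∧
      H = ⊤ :=
  stmt2_general G d g hg
end

section
/- Let M be a normal subgroup of a finite group G, d ≥ d(G), and let x, y be non-isolated vertices of Γ_d(G). If the cosets xM and yM lie in the same connected component of Γ_d(G/M), then there exists m ∈ M such that x and ym lie in the same connected component of Γ_d(G). -/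
/-!
A path from `x̄` in `Γ_d(G/M)` is lifted one edge at a time. Suppose `g` is non-isolated and
`ḡ` is adjacent to `b` via a generating `d`-set `{ḡ} ∪ T` of `G/M`. Any lift of `T` generates `G`
together with `g` and `M`, and some `d - 1` elements generate `G` together with `g` (those of a
generating `d`-set through `g`), so by Gaschütz's lemma the lifts can be corrected by elements of
`M` into a generating `d`-set through `g`, one of whose members lifts `b`.

Gaschütz's lemma is proved by counting. For `K ⊔ N = ⊤` and `X ⊆ K`, the tuples `n ∈ N^ι` with
all `g i * n i ∈ K` number `|N ∩ K|^|ι|` whatever `g` is. Sorting them by the subgroup they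
generate with `X` and inducting on `K` shows that, among the `g` generating `G` with `X` modulo `N`,
the number of `n` for which `g * n` generates exactly `K` with `X` does not depend on `g` either;
for `K = ⊤` it is positive when `g` already generates `G` with `X`.
-/

open Subgroup Finset
open scoped Pointwise

section Gaschutz

open scoped Classical

variable {G : Type*} [Group G] (N : Subgroup G) (X : Set G) {ι : Type*}

theorem closure_range_mul_union_sup {g n : ι → G} (hn : ∀ i, n i ∈ N) :
    closure (Set.range (fun i => g i * n i) ∪ X) ⊔ N = closure (Set.range g ∪ X) ⊔ N := by
  have key : ∀ {a b : ι → G}, (∀ i, (b i)⁻¹ * a i ∈ N) →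
      closure (Set.range a ∪ X) ⊔ N ≤ closure (Set.range b ∪ X) ⊔ N := by
    intro a b hab
    refine sup_le ((closure_le _).2 (Set.union_subset ?_ ?_)) le_sup_right
    · rintro - ⟨i, rfl⟩
      simpa using mul_mem (mem_sup_left (subset_closure (Or.inl ⟨i, rfl⟩)) :
        b i ∈ closure (Set.range b ∪ X) ⊔ N) (mem_sup_right (hab i))
    · exact fun x hx => mem_sup_left (subset_closure (Or.inr hx))
  exact le_antisymm (key fun i => by simpa using N.inv_mem (hn i))
    (key fun i => by simpa using hn i)

variable [Fintype G] [Fintype ι]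

noncomputable def perturbations (g : ι → G) (K : Subgroup G) : Finset (ι → N) :=
  {n | closure (Set.range (fun i => g i * n i) ∪ X) = K}

theorem card_filter_mul_mem_eq {K : Subgroup G} {g : G} {n₀ : N} (h : g * n₀ ∈ K) :
    #{n : N | g * n ∈ K} = #{n : N | (n : G) ∈ K} := by
  refine card_nbij' (n₀⁻¹ * ·) (n₀ * ·) ?_ ?_ (by simp [Set.LeftInvOn])
    (by simp [Set.RightInvOn, Set.LeftInvOn])
  · intro n hn
    simp only [coe_filter, mem_univ, true_and, Set.mem_ofPred_eq] at hn ⊢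
    simpa [mul_assoc] using K.mul_mem (K.inv_mem h) hn
  · intro n hn
    simp only [coe_filter, mem_univ, true_and, Set.mem_ofPred_eq] at hn ⊢
    simpa [mul_assoc] using K.mul_mem h hn

theorem sum_card_perturbations [N.Normal] (g : ι → G) {K : Subgroup G} (hX : X ⊆ K)
    (hK : K ⊔ N = ⊤) :
    ∑ L with L ≤ K, #(perturbations N X g L) = #{n : N | (n : G) ∈ K} ^ Fintype.card ι := by
  have hlift : ∀ i, ∃ n₀ : N, g i * n₀ ∈ K := by
    intro i
    obtain ⟨k, hk, m, hm, hkm⟩ : g i ∈ (K : Set G) * (N : Set G) := by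
      rw [← mul_normal, hK]; trivial
    exact ⟨⟨m⁻¹, N.inv_mem hm⟩, by simpa [← hkm] using hk⟩
  calc ∑ L with L ≤ K, #(perturbations N X g L)
      = #(Fintype.piFinset fun i => ({n : N | g i * n ∈ K} : Finset N)) := by
        rw [card_eq_sum_card_fiberwise (t := {L | L ≤ K})
          (f := fun n : ι → N => closure (Set.range (fun i => g i * n i) ∪ X))]
        · refine sum_congr rfl fun L hL => congrArg card (ext fun n => ?_)
          simp only [mem_filter, mem_univ, true_and] at hL
          simp only [perturbations, mem_filter, mem_univ, true_and, Fintype.mem_piFinset,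
            iff_and_self]
          rintro rfl i
          exact hL (subset_closure (Or.inl ⟨i, rfl⟩))
        · intro n hn
          simp only [coe_filter, mem_univ, true_and, Set.mem_ofPred_eq, Fintype.coe_piFinset,
            Set.mem_pi] at hn ⊢
          exact (closure_le _).2
            (Set.union_subset (Set.range_subset_iff.2 fun i => hn i trivial) hX)
    _ = #{n : N | (n : G) ∈ K} ^ Fintype.card ι := by
        rw [Fintype.card_piFinset, prod_congr rfl fun i _ =>
          card_filter_mul_mem_eq N (hlift i).choose_spec]
        simp

variable {N X}

theorem sup_eq_top_of_mem_perturbations {g : ι → G} (hg : closure (Set.range g ∪ X) ⊔ N = ⊤)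
    {K : Subgroup G} {n : ι → N} (hn : n ∈ perturbations N X g K) : K ⊔ N = ⊤ := by
  simp only [perturbations, mem_filter, mem_univ, true_and] at hn
  rw [← hn, closure_range_mul_union_sup N X fun i => (n i).2, hg]

theorem subset_of_mem_perturbations {g : ι → G} {K : Subgroup G} {n : ι → N}
    (hn : n ∈ perturbations N X g K) : X ⊆ K := by
  simp only [perturbations, mem_filter, mem_univ, true_and] at hn
  exact hn ▸ Set.subset_union_right.trans subset_closure

theorem card_perturbations_eq [N.Normal] {g g' : ι → G} (hg : closure (Set.range g ∪ X) ⊔ N = ⊤)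
    (hg' : closure (Set.range g' ∪ X) ⊔ N = ⊤) (K : Subgroup G) :
    #(perturbations N X g K) = #(perturbations N X g' K) := by
  induction K using WellFoundedLT.induction with
  | _ K ih =>
  by_cases hK : X ⊆ K ∧ K ⊔ N = ⊤
  · have hsum := sum_card_perturbations N X g hK.1 hK.2
    rw [← sum_card_perturbations N X g' hK.1 hK.2] at hsum
    have hKmem : K ∈ ({L | L ≤ K} : Finset (Subgroup G)) := by simp
    rw [← sum_erase_add _ _ hKmem, ← sum_erase_add _ _ hKmem,
      sum_congr rfl fun L hL => ih L ?_] at hsum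
    · exact Nat.add_left_cancel hsum
    · simp only [mem_erase, mem_filter, mem_univ, true_and] at hL
      exact lt_of_le_of_ne hL.2 hL.1
  · have hempty : ∀ {h : ι → G}, closure (Set.range h ∪ X) ⊔ N = ⊤ →
        perturbations N X h K = ∅ := fun hh => eq_empty_of_forall_notMem fun n hn =>
      hK ⟨subset_of_mem_perturbations hn, sup_eq_top_of_mem_perturbations hh hn⟩
    rw [hempty hg, hempty hg']

end Gaschutz

theorem gaschutz {G : Type*} [Group G] [Finite G] (N : Subgroup G) [N.Normal] (X : Set G)
    {ι : Type*} [Finite ι] {g y : ι → G} (hy : closure (Set.range y ∪ X) = ⊤)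
    (hg : closure (Set.range g ∪ X) ⊔ N = ⊤) :
    ∃ n : ι → G, (∀ i, n i ∈ N) ∧ closure (Set.range (fun i => g i * n i) ∪ X) = ⊤ := by
  classical
  cases nonempty_fintype G
  cases nonempty_fintype ι
  have hy1 : (fun _ => 1) ∈ perturbations N X y ⊤ := by simpa [perturbations] using hy
  obtain ⟨n, hn⟩ : (perturbations N X g ⊤).Nonempty := by
    rw [← card_pos, card_perturbations_eq hg (by rw [hy, top_sup_eq]) ⊤, card_pos]
    exact ⟨_, hy1⟩
  simp only [perturbations, mem_filter, mem_univ, true_and] at hn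
  exact ⟨fun i => n i, fun i => (n i).2, hn⟩

theorem sup_eq_top_of_map_mk_eq_top {G : Type*} [Group G] {M : Subgroup G} [M.Normal]
    {K : Subgroup G} (hK : K.map (QuotientGroup.mk' M) = ⊤) : K ⊔ M = ⊤ := by
  rw [← QuotientGroup.ker_mk' M, ← comap_map_eq, hK, comap_top]

theorem exists_lift_closure_eq_top {G : Type*} [Group G] [Finite G] (M : Subgroup G) [M.Normal]
    (X : Set G) {ι : Type*} [Finite ι] {w : ι → G ⧸ M}
    (hw : closure (Set.range w ∪ (↑) '' X) = ⊤) {y : ι → G}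
    (hy : closure (Set.range y ∪ X) = ⊤) :
    ∃ f : ι → G, (∀ i, (f i : G ⧸ M) = w i) ∧ closure (Set.range f ∪ X) = ⊤ := by
  have hlift : closure (Set.range (fun i => (w i).out) ∪ X) ⊔ M = ⊤ := by
    refine sup_eq_top_of_map_mk_eq_top ?_
    rw [MonoidHom.map_closure, Set.image_union, ← Set.range_comp]
    simpa [Function.comp_def] using hw
  obtain ⟨n, hnM, hn⟩ := gaschutz M X hy hlift
  refine ⟨fun i => (w i).out * n i, fun i => ?_, hn⟩
  rw [QuotientGroup.mk_mul, (QuotientGroup.eq_one_iff _).2 (hnM i), mul_one, QuotientGroup.out_eq']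

theorem exists_adj_of_adj_mk {G : Type*} [Group G] [Finite G] {M : Subgroup G} [M.Normal]
    {d : ℕ} {g : G} (hg : NonIsolated G d g) {b : G ⧸ M}
    (hadj : (genGraph (G ⧸ M) d).Adj g b) :
    ∃ z : G, (z : G ⧸ M) = b ∧ (genGraph G d).Adj g z := by
  classical
  obtain ⟨hne, s, rfl, hgs, hbs, hs⟩ := hadj
  obtain ⟨-, -, u, hu, hgu, -, hu_gen⟩ := hg
  have hcard : #(s.erase (g : G ⧸ M)) = #(u.erase g) := by
    rw [card_erase_of_mem hgs, card_erase_of_mem hgu, hu]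
  have hw : closure (Set.range (Subtype.val : s.erase (g : G ⧸ M) → G ⧸ M) ∪
      (↑) '' {g}) = ⊤ := by
    rwa [Set.image_singleton, Subtype.range_coe, Set.union_singleton, ← coe_insert,
      insert_erase hgs]
  have hy : closure (Set.range (Subtype.val ∘ equivOfCardEq hcard) ∪ {g}) = ⊤ := by
    rwa [EquivLike.range_comp, Subtype.range_coe,
      Set.union_singleton, ← coe_insert, insert_erase hgu]
  obtain ⟨f, hf, hf_gen⟩ := exists_lift_closure_eq_top M {g} hw hy
  have hf_inj : Function.Injective f := fun i j hij => Subtype.ext (by rw [← hf, ← hf, hij])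
  have hg_notMem : g ∉ univ.image f := by
    simp only [mem_image, mem_univ, true_and, not_exists]
    intro i hi
    simpa [← hi, hf] using i.2
  refine ⟨f ⟨b, mem_erase.2 ⟨hne.symm, hbs⟩⟩, hf _, fun h => hne (by rw [h, hf]),
    insert g (univ.image f), ?_, mem_insert_self _ _,
    mem_insert_of_mem (mem_image_of_mem _ (mem_univ _)), ?_⟩
  · rw [card_insert_of_notMem hg_notMem, card_image_of_injective _ hf_inj, card_univ,
      Fintype.card_coe, card_erase_of_mem hgs, Nat.sub_add_cancel (card_pos.2 ⟨_, hgs⟩)]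
  · rwa [coe_insert, coe_image, coe_univ, Set.image_univ, Set.insert_eq, Set.union_comm]

theorem exists_reachable_of_reachable_mk {G : Type*} [Group G] [Finite G] {M : Subgroup G}
    [M.Normal] {d : ℕ} {g : G} (hg : NonIsolated G d g) {b : G ⧸ M}
    (h : (genGraph (G ⧸ M) d).Reachable g b) :
    ∃ z : G, (z : G ⧸ M) = b ∧ (genGraph G d).Reachable g z := by
  obtain ⟨p⟩ := h
  generalize ha : (g : G ⧸ M) = a at p
  induction p generalizing g with
  | nil => exact ⟨g, ha, .rfl⟩
  | cons hadj _ ih =>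
    obtain ⟨z, rfl, hgz⟩ := exists_adj_of_adj_mk hg (ha ▸ hadj)
    obtain ⟨w, hw, hzw⟩ := ih ⟨g, hgz.symm⟩ rfl
    exact ⟨w, hw, hgz.reachable.trans hzw⟩

theorem stmt3_general (G : Type*) [Group G] [Finite G] (M : Subgroup G) [M.Normal]
    (d : ℕ) (x y : G)
    (hx : NonIsolated G d x)
    (h : (genGraph (G ⧸ M) d).Reachable (x : G ⧸ M) (y : G ⧸ M)) :
    ∃ m ∈ M, (genGraph G d).Reachable x (y * m) := by
  obtain ⟨z, hz, hxz⟩ := exists_reachable_of_reachable_mk hx h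
  exact ⟨y⁻¹ * z, QuotientGroup.eq.mp hz.symm, by rwa [mul_inv_cancel_left]⟩

theorem stmt3 (G : Type*) [Group G] [Finite G] (M : Subgroup G) [M.Normal]
    (d : ℕ) (hd : minGen G ≤ d) (x y : G)
    (hx : NonIsolated G d x) (hy : NonIsolated G d y)
    (h : (genGraph (G ⧸ M) d).Reachable (x : G ⧸ M) (y : G ⧸ M)) :
    ∃ m ∈ M, (genGraph G d).Reachable x (y * m) :=
  stmt3_general G M d x y hx h
end

section
/- Let G be a finite group, X ⊆ G, M ⊴ G, and suppose ⟨g₁,...,g_r⟩ together with X and M generates G. If r ≥ d_X(G), the minimal number of elements of G generating G together with X, then there exist n₁,...,n_r ∈ M such that ⟨g₁n₁,...,g_r n_r⟩ together with X generates G. -/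
/-- `d_X(G)`: the smallest number of elements of `G` generating `G` together
with the elements of `X`. -/
noncomputable def dRel (G : Type*) [Group G] (X : Set G) : ℕ :=
  sInf {n : ℕ | ∃ f : Fin n → G, Subgroup.closure (X ∪ Set.range f) = ⊤}

/-!
Gaschütz's counting argument. For a subgroup `H ⊇ X` with `H ⊔ M = G`, the tuples `m ∈ M^r`
with `g i * m i ∈ H` for all `i` number `|H ⊓ M|^r`, whatever `g` is. Sorting them by the
subgroup `⟨X, g·m⟩ ≤ H` they generate and inducting over `H` shows that, among tuples `g`
generating `G` modulo `M` together with `X`, the number of `m ∈ M^r` with `⟨X, g·m⟩ = H` does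
not depend on `g`. For `H = G` compare `g` with a tuple of length `r` that generates `G`
together with `X`, which exists since `d_X(G) ≤ r`: for the latter `m = 1` works.
-/

open Finset Subgroup
open scoped Pointwise

attribute [local instance] Classical.propDecidable

namespace Gaschutz

variable {G : Type*} [Group G] {X : Set G} {M : Subgroup G} {r : ℕ}

theorem closure_union_range_mul_sup_le (X : Set G) (g : Fin r → G) {m : Fin r → G}
    (hm : ∀ i, m i ∈ M) :
    closure (X ∪ Set.range fun i => g i * m i) ⊔ M ≤ closure (X ∪ Set.range g) ⊔ M := by
  refine sup_le ((closure_le _).2 ?_) le_sup_right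
  rintro x (hx | ⟨i, rfl⟩)
  · exact mem_sup_left (subset_closure (Or.inl hx))
  · exact mul_mem (mem_sup_left (subset_closure (Or.inr ⟨i, rfl⟩))) (mem_sup_right (hm i))

theorem closure_union_range_mul_sup (X : Set G) (g : Fin r → G) {m : Fin r → G}
    (hm : ∀ i, m i ∈ M) :
    closure (X ∪ Set.range fun i => g i * m i) ⊔ M = closure (X ∪ Set.range g) ⊔ M := by
  refine le_antisymm (closure_union_range_mul_sup_le X g hm) ?_
  simpa using closure_union_range_mul_sup_le X (fun i => g i * m i) (m := fun i => (m i)⁻¹)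
    fun i => inv_mem (hm i)

theorem natCard_mem_and_mul_mem [M.Normal] {H : Subgroup G} (hHM : H ⊔ M = ⊤) (x : G) :
    Nat.card {m // m ∈ M ∧ x * m ∈ H} = Nat.card (H ⊓ M : Subgroup G) := by
  obtain ⟨h, hh, a, ha, rfl⟩ : x ∈ (H : Set G) * (M : Set G) := by
    rw [← mul_normal, hHM]; trivial
  refine Nat.card_congr ((Equiv.mulLeft a).subtypeEquiv fun m => ?_)
  rw [Equiv.coe_mulLeft, Subgroup.mem_inf, mul_assoc, H.mul_mem_cancel_left hh,
    M.mul_mem_cancel_left ha, and_comm]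

variable [Fintype G]

noncomputable def perturbationsInto (M : Subgroup G) (g : Fin r → G) (H : Subgroup G) :
    Finset (Fin r → G) :=
  Fintype.piFinset fun i => {m | m ∈ M ∧ g i * m ∈ H}

noncomputable def perturbationsGenerating (X : Set G) (M : Subgroup G) (g : Fin r → G)
    (H : Subgroup G) : Finset (Fin r → G) :=
  {m | (∀ i, m i ∈ M) ∧ closure (X ∪ Set.range fun i => g i * m i) = H}

theorem card_perturbationsInto [M.Normal] (g : Fin r → G) {H : Subgroup G} (hHM : H ⊔ M = ⊤) :
    #(perturbationsInto M g H) = Nat.card (H ⊓ M : Subgroup G) ^ r := by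
  simp only [perturbationsInto, Fintype.card_piFinset, ← Fintype.card_subtype,
    ← Nat.card_eq_fintype_card, natCard_mem_and_mul_mem hHM, prod_const, card_univ, Nat.card_fin]

theorem card_perturbationsInto_eq_sum (g : Fin r → G) {H : Subgroup G} (hXH : X ⊆ H) :
    #(perturbationsInto M g H) = ∑ K with K ≤ H, #(perturbationsGenerating X M g K) := by
  have hmaps : (perturbationsInto M g H : Set (Fin r → G)).MapsTo
      (fun m => closure (X ∪ Set.range fun i => g i * m i)) ({K | K ≤ H} : Finset _) := by
    intro m hm
    simp only [perturbationsInto, coe_filter, Fintype.coe_piFinset, Set.mem_pi, mem_univ,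
      true_and, Set.mem_univ, forall_const] at hm ⊢
    refine (closure_le _).2 ?_
    rintro x (hx | ⟨i, rfl⟩)
    exacts [hXH hx, (hm i).2]
  rw [card_eq_sum_card_fiberwise hmaps]
  refine sum_congr rfl fun K hK => congrArg card (Finset.ext fun m => ?_)
  simp only [perturbationsInto, perturbationsGenerating, Fintype.mem_piFinset, mem_filter, mem_univ,
    true_and, forall_and] at hK ⊢
  refine ⟨fun ⟨⟨hmM, _⟩, hcl⟩ => ⟨hmM, hcl⟩, fun ⟨hmM, hcl⟩ => ⟨⟨hmM, fun i => hK ?_⟩, hcl⟩⟩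
  exact hcl ▸ subset_closure (Or.inr ⟨i, rfl⟩)

theorem subset_and_sup_eq_top_of_perturbationsGenerating_nonempty {g : Fin r → G} {H : Subgroup G}
    (hg : closure (X ∪ Set.range g) ⊔ M = ⊤) (hne : (perturbationsGenerating X M g H).Nonempty) :
    X ⊆ H ∧ H ⊔ M = ⊤ := by
  obtain ⟨m, hm⟩ := hne
  simp only [perturbationsGenerating, mem_filter, mem_univ, true_and] at hm
  obtain ⟨hmM, rfl⟩ := hm
  exact ⟨fun x hx => subset_closure (Or.inl hx), by rwa [closure_union_range_mul_sup X g hmM]⟩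

theorem card_perturbationsGenerating_eq [M.Normal] {g g' : Fin r → G}
    (hg : closure (X ∪ Set.range g) ⊔ M = ⊤) (hg' : closure (X ∪ Set.range g') ⊔ M = ⊤)
    (H : Subgroup G) :
    #(perturbationsGenerating X M g H) = #(perturbationsGenerating X M g' H) := by
  induction H using WellFoundedLT.induction with | _ H ih
  by_cases hH : X ⊆ H ∧ H ⊔ M = ⊤
  · have hIic : univ.filter (· ≤ H) = insert H (univ.filter (· < H)) := by
      ext K
      simp only [mem_filter, mem_univ, true_and, mem_insert, le_iff_lt_or_eq, or_comm]
    have hsplit (k : Fin r → G) : Nat.card (H ⊓ M : Subgroup G) ^ r =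
        #(perturbationsGenerating X M k H) + ∑ K with K < H, #(perturbationsGenerating X M k K) := by
      rw [← card_perturbationsInto k hH.2, card_perturbationsInto_eq_sum k hH.1, hIic,
        sum_insert (by simp)]
    have hlower : ∑ K with K < H, #(perturbationsGenerating X M g K) =
        ∑ K with K < H, #(perturbationsGenerating X M g' K) :=
      sum_congr rfl fun K hK => ih K (mem_filter.1 hK).2
    have := hsplit g
    have := hsplit g'
    omega
  · have hempty (k : Fin r → G) (hk : closure (X ∪ Set.range k) ⊔ M = ⊤) :
        perturbationsGenerating X M k H = ∅ :=
      not_nonempty_iff_eq_empty.1 fun hne =>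
        hH (subset_and_sup_eq_top_of_perturbationsGenerating_nonempty hk hne)
    rw [hempty g hg, hempty g' hg']

end Gaschutz

theorem exists_closure_union_range_eq_top_of_dRel_le {G : Type*} [Group G] [Finite G] (X : Set G)
    {r : ℕ} (hr : dRel G X ≤ r) : ∃ h : Fin r → G, closure (X ∪ Set.range h) = ⊤ := by
  obtain ⟨f, hf⟩ : ∃ f : Fin (dRel G X) → G, closure (X ∪ Set.range f) = ⊤ := by
    obtain ⟨n, ⟨e⟩⟩ := Finite.exists_equiv_fin G
    have hne : {n : ℕ | ∃ f : Fin n → G, closure (X ∪ Set.range f) = ⊤}.Nonempty :=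
      ⟨n, e.symm, eq_top_iff.2 fun x _ => subset_closure (Or.inr ⟨e x, e.symm_apply_apply x⟩)⟩
    exact Nat.sInf_mem hne
  refine ⟨fun i => if hi : (i : ℕ) < dRel G X then f ⟨i, hi⟩ else 1, top_unique (hf ▸ ?_)⟩
  refine closure_mono (Set.union_subset_union_right X ?_)
  rintro _ ⟨j, rfl⟩
  exact ⟨j.castLE hr, by simp⟩

theorem stmt4 (G : Type*) [Group G] [Finite G] (X : Set G)
    (M : Subgroup G) [M.Normal] (r : ℕ) (g : Fin r → G)
    (hgen : Subgroup.closure (X ∪ Set.range g ∪ (M : Set G)) = ⊤)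
    (hr : dRel G X ≤ r) :
    ∃ n : Fin r → G, (∀ i, n i ∈ M) ∧
      Subgroup.closure (X ∪ Set.range fun i => g i * n i) = ⊤ := by
  cases nonempty_fintype G
  rw [Subgroup.closure_union, closure_eq] at hgen
  obtain ⟨g₀, hg₀⟩ := exists_closure_union_range_eq_top_of_dRel_le X hr
  have h_one : (1 : Fin r → G) ∈ Gaschutz.perturbationsGenerating X M g₀ ⊤ := by
    simpa [Gaschutz.perturbationsGenerating] using hg₀
  have hcard := Gaschutz.card_perturbationsGenerating_eq hgen (by rw [hg₀, top_sup_eq]) ⊤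
  obtain ⟨n, hn⟩ := card_pos.1 (hcard ▸ card_pos.2 ⟨1, h_one⟩)
  exact ⟨n, by simpa [Gaschutz.perturbationsGenerating] using hn⟩
end

section
/- Let Λ be a bipartite graph with parts P and Q, each of cardinality n, such that every vertex has degree at least εn, where 0 < ε and the number of edges of Λ is strictly greater than n²(1 − 2ε²). Then Λ is connected. -/
/-!
If the bipartite graph is disconnected, the vertices reachable from a fixed one give splittings
`P = A ∪ Aᶜ`, `Q = B ∪ Bᶜ` such that every edge joins `A` to `B` or `Aᶜ` to `Bᶜ`. The degree
condition forces all four parts to have at least `εn` elements, and then the number of edges is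
at most `|A||B| + |Aᶜ||Bᶜ| = n² - |A||Bᶜ| - |Aᶜ||B| ≤ n² - 2ε²n²`.
-/

/-- The bipartite graph on `P ⊕ Q` determined by a relation `E : P → Q → Prop`. -/
def bipGraph {P Q : Type*} (E : P → Q → Prop) : SimpleGraph (P ⊕ Q) where
  Adj x y :=
    match x, y with
    | Sum.inl p, Sum.inr q => E p q
    | Sum.inr q, Sum.inl p => E p q
    | _, _ => False
  symm := ⟨by rintro (p | q) (p' | q') h <;> first | exact h.elim | exact h⟩
  loopless := ⟨by rintro (p | q) h <;> exact h⟩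

open Finset

theorem mul_add_mul_add_two_mul_sq_le {R : Type*} [CommSemiring R] [PartialOrder R]
    [IsOrderedRing R] {n a a' b b' δ : R} (hδ : 0 ≤ δ) (ha : δ ≤ a) (ha' : δ ≤ a')
    (hb : δ ≤ b) (hb' : δ ≤ b') (hA : a + a' = n) (hB : b + b' = n) :
    a * b + a' * b' + 2 * δ ^ 2 ≤ n ^ 2 := by
  have hab' : δ ^ 2 ≤ a * b' := sq δ ▸ mul_le_mul ha hb' hδ (hδ.trans ha)
  have ha'b : δ ^ 2 ≤ a' * b := sq δ ▸ mul_le_mul ha' hb hδ (hδ.trans ha')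
  calc a * b + a' * b' + 2 * δ ^ 2
      ≤ a * b + a' * b' + (a * b' + a' * b) := by rw [two_mul]; gcongr
    _ = (a + a') * (b + b') := by ring
    _ = n ^ 2 := by rw [hA, hB, sq]

section

variable {P Q : Type*}

def BipSplits (E : P → Q → Prop) (A : Finset P) (B : Finset Q) : Prop :=
  ∀ p q, E p q → (p ∈ A ↔ q ∈ B)

variable {E : P → Q → Prop} {A : Finset P} {B : Finset Q}

theorem BipSplits.flip (h : BipSplits E A B) : BipSplits (flip E) B A := fun q p hpq => (h p q hpq).symm

theorem BipSplits.card_neighbors_le (h : BipSplits E A B) {p : P} (hp : p ∈ A) :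
    Nat.card {q // E p q} ≤ #B := by
  rw [← Nat.card_eq_finsetCard]
  exact Nat.card_le_card_of_injective (fun q => ⟨q.1, (h p q.1 q.2).mp hp⟩)
    fun _ _ hqq' => Subtype.ext (Subtype.mk.inj hqq')

theorem BipSplits.le_card_right {δ : ℝ} (h : BipSplits E A B) (hd : ∀ p, δ ≤ Nat.card {q // E p q})
    (hA : A.Nonempty) : δ ≤ #B :=
  let ⟨_, hp⟩ := hA
  (hd _).trans (by exact_mod_cast h.card_neighbors_le hp)

theorem BipSplits.le_card {δ : ℝ} (h : BipSplits E A B) (hδ : 0 < δ)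
    (hdP : ∀ p, δ ≤ Nat.card {q // E p q}) (hdQ : ∀ q, δ ≤ Nat.card {p // E p q})
    (hAB : A.Nonempty ∨ B.Nonempty) : δ ≤ #A ∧ δ ≤ #B := by
  rcases hAB with hA | hB
  · have hB := h.le_card_right hdP hA
    exact ⟨h.flip.le_card_right hdQ (card_pos.mp (by exact_mod_cast hδ.trans_le hB)), hB⟩
  · have hA := h.flip.le_card_right hdQ hB
    exact ⟨hA, h.le_card_right hdP (card_pos.mp (by exact_mod_cast hδ.trans_le hA))⟩

variable [Fintype P] [Fintype Q]

theorem bipSplits_reachable (E : P → Q → Prop) (u : P ⊕ Q)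
    [DecidablePred fun p => (bipGraph E).Reachable u (.inl p)]
    [DecidablePred fun q => (bipGraph E).Reachable u (.inr q)] :
    BipSplits E {p | (bipGraph E).Reachable u (.inl p)} {q | (bipGraph E).Reachable u (.inr q)} :=
  fun p q hpq => by
    have hadj : (bipGraph E).Adj (.inl p) (.inr q) := hpq
    simpa only [mem_filter, mem_univ, true_and] using
      ⟨fun hp => hp.trans hadj.reachable, fun hq => hq.trans hadj.symm.reachable⟩

variable [DecidableEq P] [DecidableEq Q]

theorem BipSplits.compl (h : BipSplits E A B) : BipSplits E Aᶜ Bᶜ := fun p q hpq => by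
  simpa only [mem_compl, not_iff_not] using h p q hpq

theorem BipSplits.card_edges_le (h : BipSplits E A B) :
    Nat.card {pq : P × Q // E pq.1 pq.2} ≤ #A * #B + #Aᶜ * #Bᶜ := by
  classical
  have hsub : univ.filter (fun pq : P × Q => E pq.1 pq.2) ⊆ A ×ˢ B ∪ Aᶜ ×ˢ Bᶜ := by
    rintro ⟨p, q⟩ hpq
    have hpq := h p q (mem_filter.mp hpq).2
    by_cases hp : p ∈ A
    · exact mem_union_left _ (mem_product.mpr ⟨hp, hpq.mp hp⟩)
    · exact mem_union_right _ (mem_product.mpr ⟨mem_compl.mpr hp, mem_compl.mpr (hpq.not.mp hp)⟩)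
  rw [Nat.card_eq_fintype_card, Fintype.card_subtype, ← card_product, ← card_product]
  exact (card_le_card hsub).trans (card_union_le _ _)

theorem exists_bipSplits_of_not_preconnected (hE : ¬(bipGraph E).Preconnected) :
    ∃ (A : Finset P) (B : Finset Q), BipSplits E A B ∧ (A.Nonempty ∨ B.Nonempty) ∧
      (Aᶜ.Nonempty ∨ Bᶜ.Nonempty) := by
  classical
  obtain ⟨u, v, huv⟩ : ∃ u v, ¬(bipGraph E).Reachable u v := by
    simpa only [SimpleGraph.Preconnected, not_forall] using hE
  refine ⟨_, _, bipSplits_reachable E u, ?_, ?_⟩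
  · rcases u with p | q
    · exact .inl ⟨p, by simp⟩
    · exact .inr ⟨q, by simp⟩
  · rcases v with p | q
    · exact .inl ⟨p, by simpa using huv⟩
    · exact .inr ⟨q, by simpa using huv⟩

end

theorem stmt6 {P Q : Type*} [Fintype P] [Fintype Q] (n : ℕ)
    (hP : Fintype.card P = n) (hQ : Fintype.card Q = n)
    (E : P → Q → Prop) (ε : ℝ) (hε : 0 < ε)
    (hdP : ∀ p : P, ε * n ≤ Nat.card {q : Q // E p q})
    (hdQ : ∀ q : Q, ε * n ≤ Nat.card {p : P // E p q})
    (hedge : (n : ℝ) ^ 2 * (1 - 2 * ε ^ 2) <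
      Nat.card {pq : P × Q // E pq.1 pq.2}) :
    (bipGraph E).Connected := by
  classical
  have hn : 0 < n := by
    refine Nat.pos_of_ne_zero fun hn => ?_
    subst hn
    have : IsEmpty P := Fintype.card_eq_zero_iff.mp hP
    simp at hedge
  have hεn : 0 < ε * n := by positivity
  have : Nonempty P := Fintype.card_pos_iff.mp (hP ▸ hn)
  refine (SimpleGraph.connected_iff _).mpr ⟨?_, inferInstance⟩
  by_contra hE
  obtain ⟨A, B, hAB, hne, hne'⟩ := exists_bipSplits_of_not_preconnected hE
  obtain ⟨hA, hB⟩ := hAB.le_card hεn hdP hdQ hne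
  obtain ⟨hA', hB'⟩ := hAB.compl.le_card hεn hdP hdQ hne'
  have hsum : #A + #Aᶜ = (n : ℝ) := by exact_mod_cast (card_add_card_compl A).trans hP
  have hsum' : #B + #Bᶜ = (n : ℝ) := by exact_mod_cast (card_add_card_compl B).trans hQ
  have hcount := mul_add_mul_add_two_mul_sq_le hεn.le hA hA' hB hB' hsum hsum'
  have hedges : (Nat.card {pq : P × Q // E pq.1 pq.2} : ℝ) ≤ #A * #B + #Aᶜ * #Bᶜ := by
    exact_mod_cast hAB.card_edges_le
  have hbound : (n : ℝ) ^ 2 * (1 - 2 * ε ^ 2) = n ^ 2 - 2 * (ε * n) ^ 2 := by ring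
  linarith
end

section
/- Δ₂(G) is connected for every finite group G if and only if Δ₂(G) is connected for every finite group G having no non-trivial soluble normal subgroup. -/
/-!
One direction is trivial. For the other, induct on `|G|`. If `G` has a nontrivial soluble normal
subgroup, it contains an abelian minimal normal subgroup `N`, and `Δ₂(G/N)` is connected by
induction; it remains to lift connectivity from `G/N` to `G`.

If `N` has no complement, then `⟨x, y⟩ = G` as soon as `⟨xN, yN⟩ = G/N`, and walks lift directly.
Otherwise fix a splitting `κ` of `G → G/N`. Complements of `N` correspond to cocycles `d : G/N → N`,
and a pair `x, y` with `⟨xN, yN⟩ = G/N` generates `G` iff no complement contains both. Evaluation at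
a generating pair of `G/N` embeds the cocycles into `N × N`; when `G` is 2-generated (otherwise
`Δ₂(G)` is empty) and `N ≠ 1`, the embedding is not onto. This loss of one degree of freedom is what
allows one to lift each edge of `Δ₂(G/N)` by a path of length at most three, and to join two
vertices in the same coset of `N` by a path of length at most four.
-/

open Subgroup
open scoped Pointwise

section Graph

variable {G : Type*} [Group G]

lemma genGraph_two_adj_iff {x y : G} :
    (genGraph G 2).Adj x y ↔ x ≠ y ∧ closure {x, y} = ⊤ := by
  classical
  refine ⟨fun ⟨hxy, s, hcard, hx, hy, hs⟩ => ⟨hxy, ?_⟩, fun ⟨hxy, h⟩ => ⟨hxy, {x, y}, ?_, ?_⟩⟩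
  · obtain ⟨a, b, hab, rfl⟩ := Finset.card_eq_two.mp hcard
    have : ({x, y} : Finset G) = {a, b} :=
      Finset.eq_of_subset_of_card_le (by simp [Finset.insert_subset_iff, hx, hy])
        (by rw [Finset.card_pair hab, Finset.card_pair hxy])
    simpa [← this] using hs
  · exact Finset.card_pair hxy
  · simpa using h

lemma genGraph_two_adj_of_closure {x y : G} (hxy : x ≠ y) (h : closure {x, y} = ⊤) :
    (genGraph G 2).Adj x y :=
  genGraph_two_adj_iff.mpr ⟨hxy, h⟩

lemma closure_pair_eq_top_of_adj {x y : G} (h : (genGraph G 2).Adj x y) :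
    closure {x, y} = ⊤ :=
  (genGraph_two_adj_iff.mp h).2

/-- Every vertex of a walk of positive length in `Γ₂(G)` has a neighbour on the walk. -/
lemma deltaGraph_reachable_of_reachable {u v : G} (hu : NonIsolated G 2 u)
    (hv : NonIsolated G 2 v) (h : (genGraph G 2).Reachable u v) :
    (deltaGraph G 2).Reachable ⟨u, hu⟩ ⟨v, hv⟩ := by
  obtain ⟨w⟩ := h
  induction w with
  | nil => rfl
  | cons hadj _ ih =>
    exact (SimpleGraph.Adj.reachable (G := deltaGraph G 2) (u := ⟨_, hu⟩) (v := ⟨_, _, hadj.symm⟩)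
      hadj).trans (ih _ hv)

lemma genGraph_reachable_of_deltaGraph_reachable {u v : {x // NonIsolated G 2 x}}
    (h : (deltaGraph G 2).Reachable u v) : (genGraph G 2).Reachable u v :=
  h.map (SimpleGraph.Embedding.comap (Function.Embedding.subtype _) (genGraph G 2)).toHom

lemma deltaGraph_preconnected_of_reachable
    (h : ∀ u v, NonIsolated G 2 u → NonIsolated G 2 v → (genGraph G 2).Reachable u v) :
    (deltaGraph G 2).Preconnected :=
  fun ⟨u, hu⟩ ⟨v, hv⟩ => deltaGraph_reachable_of_reachable hu hv (h u v hu hv)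

lemma deltaGraph_preconnected_of_isCyclic [IsCyclic G] : (deltaGraph G 2).Preconnected := by
  obtain ⟨g, hg⟩ := IsCyclic.exists_generator (α := G)
  have hadj : ∀ x, x ≠ g → (genGraph G 2).Adj g x := fun x hx =>
    genGraph_two_adj_of_closure (Ne.symm hx) <| eq_top_iff.mpr fun y _ =>
      (zpowers_le.mpr (subset_closure (by simp))) (hg y)
  have hreach : ∀ x, (genGraph G 2).Reachable g x := fun x => by
    by_cases hx : x = g
    · rw [hx]
    · exact (hadj x hx).reachable
  exact deltaGraph_preconnected_of_reachable fun u v _ _ => (hreach u).symm.trans (hreach v)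

end Graph

lemma SimpleGraph.Reachable.exists_lift {α β : Type*} {Γ : SimpleGraph α} {Γ' : SimpleGraph β}
    (f : α → β) (P : α → Prop)
    (step : ∀ x, P x → ∀ y, Γ'.Adj (f x) y → ∃ x', f x' = y ∧ P x' ∧ Γ.Reachable x x')
    {b : β} {x : α} (h : Γ'.Reachable (f x) b) (hx : P x) :
    ∃ x', f x' = b ∧ P x' ∧ Γ.Reachable x x' := by
  obtain ⟨w⟩ := h
  generalize hfx : f x = a at w
  induction w generalizing x with
  | nil => exact ⟨x, hfx, hx, .rfl⟩
  | cons hadj _ ih =>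
    subst hfx
    obtain ⟨x₁, rfl, hx₁, hr₁⟩ := step x hx _ hadj
    obtain ⟨x', hx', hPx', hr⟩ := ih hx₁ rfl
    exact ⟨x', hx', hPx', hr₁.trans hr⟩

lemma closure_pair_ne_of_not_isCyclic {H : Type*} [Group H] (hH : ¬ IsCyclic H) {a b : H}
    (h : closure {a, b} = ⊤) : a ≠ b ∧ a ≠ 1 ∧ b ≠ 1 := by
  have key : ∀ c d : H, closure {c, d} = ⊤ → d ∈ zpowers c → False := fun c d hcd hd =>
    hH ⟨c, fun x => (show closure {c, d} ≤ zpowers c by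
      rw [closure_le]; rintro _ (rfl | rfl) <;> simp [hd]) (hcd ▸ mem_top x)⟩
  refine ⟨?_, ?_, ?_⟩ <;> rintro rfl
  · exact key a a h (mem_zpowers a)
  · exact key b 1 (by rwa [Set.pair_comm]) (one_mem _)
  · exact key a 1 h (one_mem _)

lemma closure_pair_mul_right_eq {H : Type*} [Group H] (a b : H) :
    closure {a, a * b} = closure {a, b} := by
  have ha : a ∈ closure {a, b} := subset_closure (by simp)
  have hb : b ∈ closure {a, b} := subset_closure (by simp)
  have ha' : a ∈ closure {a, a * b} := subset_closure (by simp)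
  have hab : a * b ∈ closure {a, a * b} := subset_closure (by simp)
  apply le_antisymm <;>
    simp only [closure_le, Set.insert_subset_iff, Set.singleton_subset_iff, SetLike.mem_coe]
  · exact ⟨ha, mul_mem ha hb⟩
  · exact ⟨ha', by simpa using mul_mem (inv_mem ha') hab⟩

lemma closure_pair_mul_left_eq {H : Type*} [Group H] (a b : H) :
    closure {b, a * b} = closure {a, b} := by
  have ha : a ∈ closure {a, b} := subset_closure (by simp)
  have hb : b ∈ closure {a, b} := subset_closure (by simp)
  have hb' : b ∈ closure {b, a * b} := subset_closure (by simp)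
  have hab : a * b ∈ closure {b, a * b} := subset_closure (by simp)
  apply le_antisymm <;>
    simp only [closure_le, Set.insert_subset_iff, Set.singleton_subset_iff, SetLike.mem_coe]
  · exact ⟨hb, mul_mem ha hb⟩
  · exact ⟨by simpa using mul_mem hab (inv_mem hb'), hb'⟩

section Quotient

variable {G : Type*} [Group G] (N : Subgroup G) [N.Normal]

lemma closure_pair_mk_eq_top_iff (x y : G) :
    closure {(x : G ⧸ N), (y : G ⧸ N)} = ⊤ ↔ closure {x, y} ⊔ N = ⊤ := by
  have himage : ({(x : G ⧸ N), (y : G ⧸ N)} : Set (G ⧸ N)) = QuotientGroup.mk' N '' {x, y} := by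
    simp [Set.image_insert_eq]
  rw [himage, ← MonoidHom.map_closure, ← (comap_injective (QuotientGroup.mk'_surjective N)).eq_iff,
    comap_map_eq, QuotientGroup.ker_mk', comap_top]

lemma closure_pair_mk_eq_top_of_adj {x y : G} (h : (genGraph G 2).Adj x y) :
    closure {(x : G ⧸ N), (y : G ⧸ N)} = ⊤ := by
  rw [closure_pair_mk_eq_top_iff, closure_pair_eq_top_of_adj h, top_sup_eq]

lemma nonIsolated_mk [Nontrivial (G ⧸ N)] {u : G} (hu : NonIsolated G 2 u) :
    NonIsolated (G ⧸ N) 2 u := by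
  obtain ⟨p, hp⟩ := hu
  have hcl := closure_pair_mk_eq_top_of_adj N hp
  by_cases hup : (u : G ⧸ N) = p
  · rw [← hup, Set.pair_eq_singleton] at hcl
    have hu1 : (u : G ⧸ N) ≠ 1 := fun h1 => bot_ne_top (by rwa [h1, closure_singleton_one] at hcl)
    exact ⟨1, genGraph_two_adj_of_closure hu1 (top_le_iff.mp (hcl ▸ closure_mono (by simp)))⟩
  · exact ⟨p, genGraph_two_adj_of_closure hup hcl⟩

lemma exists_section_of_isComplement {K : Subgroup G} (h₁ : K ⊓ N = ⊥) (h₂ : K ⊔ N = ⊤) :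
    ∃ s : G ⧸ N →* G, (∀ q, ((s q : G) : G ⧸ N) = q) ∧ ∀ k ∈ K, s k = k := by
  let f : K →* G ⧸ N := (QuotientGroup.mk' N).comp K.subtype
  have hf : Function.Bijective f := by
    refine ⟨(injective_iff_map_eq_one f).mpr fun k hk => ?_, fun q => ?_⟩
    · have hkN : (k : G) ∈ K ⊓ N := ⟨k.2, (QuotientGroup.eq_one_iff _).mp hk⟩
      rw [h₁] at hkN
      exact Subtype.ext hkN
    · obtain ⟨g, rfl⟩ := QuotientGroup.mk_surjective q
      obtain ⟨k, hk, n, hn, rfl⟩ : g ∈ (K : Set G) * (N : Set G) := by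
        rw [← mul_normal, h₂]; trivial
      exact ⟨⟨k, hk⟩, by simp [f, (QuotientGroup.eq_one_iff n).mpr hn]⟩
  let e := MulEquiv.ofBijective f hf
  exact ⟨K.subtype.comp e.symm.toMonoidHom, fun q => e.apply_symm_apply q,
    fun k hk => congrArg Subtype.val (e.symm_apply_apply ⟨k, hk⟩)⟩

variable [IsMulCommutative N] (hmin : ∀ K : Subgroup G, K.Normal → K ≤ N → K = ⊥ ∨ K = N)
include hmin

/-- `K ⊓ N` is normalised by `K` and, `N` being abelian, by `N`, hence it is normal. -/
lemma eq_top_or_inf_eq_bot_of_sup_eq_top {K : Subgroup G} (hK : K ⊔ N = ⊤) :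
    K = ⊤ ∨ K ⊓ N = ⊥ := by
  have hnormal : (K ⊓ N).Normal := ⟨fun x hx g => by
    obtain ⟨k, hk, n, hn, rfl⟩ : g ∈ (K : Set G) * (N : Set G) := by rw [← mul_normal, hK]; trivial
    have hconj : k * n * x * (k * n)⁻¹ = k * x * k⁻¹ := by
      rw [show k * n * x * (k * n)⁻¹ = k * (n * x) * n⁻¹ * k⁻¹ by group,
        setLike_mul_comm hn hx.2]
      group
    rw [hconj]
    exact ⟨K.mul_mem (K.mul_mem hk hx.1) (K.inv_mem hk), Normal.conj_mem ‹_› x hx.2 k⟩⟩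
  refine (hmin _ hnormal inf_le_right).symm.imp (fun h => ?_) id
  rw [← hK, sup_eq_left.mpr (h ▸ inf_le_left)]

omit [N.Normal] in
lemma isCyclic_of_eq_top (hN : N = ⊤) : IsCyclic G := by
  rcases subsingleton_or_nontrivial G with _ | _
  · infer_instance
  · obtain ⟨g, hg⟩ := exists_ne (1 : G)
    have hmem : ∀ x : G, x ∈ N := fun x => hN ▸ mem_top x
    have hnormal : (zpowers g).Normal := ⟨fun x hx h => by
      rwa [setLike_mul_comm (hmem h) (hmem x), mul_inv_cancel_right]⟩
    rcases hmin _ hnormal (hN ▸ le_top) with h | h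
    · exact absurd (zpowers_eq_bot.mp h) hg
    · exact isCyclic_iff_exists_zpowers_eq_top.mpr ⟨g, h.trans hN⟩

end Quotient

section Cocycles

variable {G : Type*} [Group G] (N : Subgroup G) [N.Normal] (κ : G ⧸ N →* G)

/-- When `κ` splits `G → G/N`, `g ↦ (coord N κ g, ↑g)` identifies `G` with `N × G/N`. -/
def coord (g : G) : G := g * (κ (g : G ⧸ N))⁻¹

/-- The crossed homomorphisms `G/N → N` for the conjugation action through `κ`. They correspond
to the complements of `N`: `d` to the range of `cocycleSection`. -/
def cocycles [IsMulCommutative N] : Subgroup (G ⧸ N → G) where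
  carrier := {d | (∀ q, d q ∈ N) ∧ ∀ p q, d (p * q) = d p * (κ p * d q * (κ p)⁻¹)}
  one_mem' := ⟨fun _ => one_mem _, fun _ _ => by simp⟩
  mul_mem' := by
    rintro d e ⟨hdN, hd⟩ ⟨heN, he⟩
    refine ⟨fun q => mul_mem (hdN q) (heN q), fun p q => ?_⟩
    have hcomm := setLike_mul_comm (Normal.conj_mem ‹_› _ (hdN q) (κ p)) (heN p)
    calc d (p * q) * e (p * q)
        = d p * ((κ p * d q * (κ p)⁻¹) * e p) * (κ p * e q * (κ p)⁻¹) := by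
          rw [hd, he]; group
      _ = d p * e p * (κ p * (d q * e q) * (κ p)⁻¹) := by rw [hcomm]; group
  inv_mem' := by
    rintro d ⟨hdN, hd⟩
    refine ⟨fun q => inv_mem (hdN q), fun p q => ?_⟩
    have hcomm := setLike_mul_comm (inv_mem (hdN p))
      (Normal.conj_mem ‹_› _ (inv_mem (hdN q)) (κ p))
    calc (d (p * q))⁻¹ = (κ p * (d q)⁻¹ * (κ p)⁻¹) * (d p)⁻¹ := by rw [hd]; group
      _ = (d p)⁻¹ * (κ p * (d q)⁻¹ * (κ p)⁻¹) := hcomm.symm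

variable {N κ}

section Coordinates

variable (hκ : ∀ q, ((κ q : G) : G ⧸ N) = q)
include hκ

lemma mk_mul_section {s : G} (hs : s ∈ N) (q : G ⧸ N) : ((s * κ q : G) : G ⧸ N) = q := by
  rw [QuotientGroup.mk_mul, (QuotientGroup.eq_one_iff s).mpr hs, one_mul, hκ]

lemma coord_mul_section {s : G} (hs : s ∈ N) (q : G ⧸ N) : coord N κ (s * κ q) = s := by
  rw [coord, mk_mul_section hκ hs, mul_inv_cancel_right]

lemma coord_mem (g : G) : coord N κ g ∈ N := by
  rw [← QuotientGroup.eq_one_iff, coord, QuotientGroup.mk_mul, QuotientGroup.mk_inv, hκ,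
    mul_inv_cancel]

lemma coord_of_mem {n : G} (hn : n ∈ N) : coord N κ n = n := by
  simpa using coord_mul_section hκ hn 1

end Coordinates

variable [IsMulCommutative N]

lemma cocycle_mem {d : G ⧸ N → G} (hd : d ∈ cocycles N κ) (q : G ⧸ N) : d q ∈ N := hd.1 q

def cocycleSection {d : G ⧸ N → G} (hd : d ∈ cocycles N κ) : G ⧸ N →* G :=
  MonoidHom.mk' (fun q => d q * κ q) fun p q => by simp only [hd.2 p q, map_mul]; group

lemma cocycleSection_apply {d : G ⧸ N → G} (hd : d ∈ cocycles N κ) (q : G ⧸ N) :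
    cocycleSection hd q = d q * κ q := rfl

lemma cocycle_apply_one {d : G ⧸ N → G} (hd : d ∈ cocycles N κ) : d 1 = 1 := by
  have h := (cocycleSection hd).map_one
  rwa [cocycleSection_apply, map_one, mul_one] at h

lemma cocycle_eq_of_closure_pair_eq_top {p q : G ⧸ N} (hpq : closure {p, q} = ⊤)
    {d e : G ⧸ N → G} (hd : d ∈ cocycles N κ) (he : e ∈ cocycles N κ)
    (hp : d p = e p) (hq : d q = e q) : d = e := by
  have h := MonoidHom.eq_of_eqOn_dense hpq (f := cocycleSection hd) (g := cocycleSection he)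
    (by rintro _ (rfl | rfl) <;> simp [cocycleSection_apply, hp, hq])
  funext r
  simpa [cocycleSection_apply] using DFunLike.congr_fun h r

variable (hκ : ∀ q, ((κ q : G) : G ⧸ N) = q)
include hκ

lemma mem_range_cocycleSection {d : G ⧸ N → G} (hd : d ∈ cocycles N κ) (g : G) :
    g ∈ (cocycleSection hd).range ↔ d g = coord N κ g := by
  constructor
  · rintro ⟨q, rfl⟩
    rw [cocycleSection_apply, coord, mk_mul_section hκ (cocycle_mem hd q), mul_inv_cancel_right]
  · intro h
    exact ⟨g, by rw [cocycleSection_apply, h, coord, inv_mul_cancel_right]⟩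

lemma exists_cocycle_of_isComplement {K : Subgroup G} (h₁ : K ⊓ N = ⊥) (h₂ : K ⊔ N = ⊤) :
    ∃ d ∈ cocycles N κ, ∀ k ∈ K, d k = coord N κ k := by
  obtain ⟨s, hs, hsK⟩ := exists_section_of_isComplement N h₁ h₂
  refine ⟨fun q => s q * (κ q)⁻¹, ⟨fun q => ?_, fun p q => ?_⟩, fun k hk => ?_⟩
  · rw [← QuotientGroup.eq_one_iff, QuotientGroup.mk_mul, QuotientGroup.mk_inv, hκ, hs,
      mul_inv_cancel]
  · simp only [map_mul]
    group
  · simp [coord, hsK k hk]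

lemma cocycle_apply_ne_of_closure_eq_top (hN : N ≠ ⊥) {g h : G} (hgh : closure {g, h} = ⊤)
    {d : G ⧸ N → G} (hd : d ∈ cocycles N κ) (hg : d g = coord N κ g) : d h ≠ coord N κ h := by
  intro hh
  have htop : (cocycleSection hd).range = ⊤ := top_le_iff.mp <| hgh ▸ (closure_le _).mpr <|
    Set.insert_subset_iff.mpr ⟨(mem_range_cocycleSection hκ hd g).mpr hg,
      Set.singleton_subset_iff.mpr ((mem_range_cocycleSection hκ hd h).mpr hh)⟩
  refine hN ((eq_bot_iff_forall _).mpr fun n hn => ?_)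
  have hmem := (mem_range_cocycleSection hκ hd n).mp (htop ▸ mem_top n)
  rwa [(QuotientGroup.eq_one_iff n).mpr hn, cocycle_apply_one hd, coord_of_mem hκ hn, eq_comm]
    at hmem

lemma closure_eq_top_of_forall_cocycle_apply_ne
    (hmin : ∀ K : Subgroup G, K.Normal → K ≤ N → K = ⊥ ∨ K = N) {g h : G}
    (hgh : closure {(g : G ⧸ N), (h : G ⧸ N)} = ⊤)
    (hcoc : ∀ d ∈ cocycles N κ, d g = coord N κ g → d h ≠ coord N κ h) :
    closure {g, h} = ⊤ := by
  have hsup := (closure_pair_mk_eq_top_iff N g h).mp hgh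
  refine (eq_top_or_inf_eq_bot_of_sup_eq_top N hmin hsup).resolve_right fun hinf => ?_
  obtain ⟨d, hd, hK⟩ := exists_cocycle_of_isComplement hκ hinf hsup
  exact hcoc d hd (hK g (subset_closure (by simp))) (hK h (subset_closure (by simp)))

end Cocycles

section Values

variable {G : Type*} [Group G] {N : Subgroup G} [N.Normal] [IsMulCommutative N] {κ : G ⧸ N →* G}

variable (N κ) in
def cocycleValues (z : G ⧸ N) : Subgroup G :=
  (cocycles N κ).map (Pi.evalMonoidHom (fun _ => G) z)

variable (N κ) in
def vanishingValues (x z : G ⧸ N) : Subgroup G :=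
  (cocycles N κ ⊓ (Pi.evalMonoidHom (fun _ => G) x).ker).map (Pi.evalMonoidHom (fun _ => G) z)

lemma mem_cocycleValues {z : G ⧸ N} {m : G} :
    m ∈ cocycleValues N κ z ↔ ∃ d ∈ cocycles N κ, d z = m := by
  simp [cocycleValues]

lemma mem_vanishingValues {x z : G ⧸ N} {m : G} :
    m ∈ vanishingValues N κ x z ↔ ∃ d ∈ cocycles N κ, d x = 1 ∧ d z = m := by
  simp [vanishingValues, and_assoc]

variable (hκ : ∀ q, ((κ q : G) : G ⧸ N) = q)
include hκ

lemma exists_coord_not_mem_cocycleValues {z : G ⧸ N} (hz : ¬ N ≤ cocycleValues N κ z) :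
    ∃ W : G, (W : G ⧸ N) = z ∧ coord N κ W ∉ cocycleValues N κ W := by
  obtain ⟨n, hnN, hn⟩ := SetLike.not_le_iff_exists.mp hz
  exact ⟨n * κ z, mk_mul_section hκ hnN z, by rwa [mk_mul_section hκ hnN, coord_mul_section hκ hnN]⟩

/-- Otherwise evaluation at `(z, y)` would map the cocycles onto `N × N`; evaluation at any
generating pair of `G/N` is injective, so by counting it would be onto as well, and some complement
would contain a generating pair `a, b` of `G`. -/
lemma not_le_vanishingValues [Finite G] (hN : N ≠ ⊥) {a b : G} (hab : closure {a, b} = ⊤)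
    {z y : G ⧸ N} (hzy : closure {z, y} = ⊤) (hz : N ≤ cocycleValues N κ z) :
    ¬ N ≤ vanishingValues N κ z y := by
  intro hy
  let ev : G ⧸ N → G ⧸ N → cocycles N κ → N × N := fun p q d =>
    (⟨d.1 p, cocycle_mem d.2 p⟩, ⟨d.1 q, cocycle_mem d.2 q⟩)
  have ev_injective {p q : G ⧸ N} (hpq : closure {p, q} = ⊤) : Function.Injective (ev p q) :=
    fun d e h => Subtype.ext <| cocycle_eq_of_closure_pair_eq_top hpq d.2 e.2
      (congrArg (fun x => (x.1 : G)) h) (congrArg (fun x => (x.2 : G)) h)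
  have hsurj : Function.Surjective (ev z y) := by
    rintro ⟨⟨n₁, hn₁⟩, ⟨n₂, hn₂⟩⟩
    obtain ⟨d, hd, hdz⟩ := mem_cocycleValues.mp (hz hn₁)
    obtain ⟨e, he, hez, hey⟩ :=
      mem_vanishingValues.mp (hy (mul_mem (inv_mem (cocycle_mem hd y)) hn₂))
    refine ⟨⟨d * e, mul_mem hd he⟩, ?_⟩
    simp [ev, hdz, hez, hey]
  have hcard := Nat.card_eq_of_bijective _ ⟨ev_injective hzy, hsurj⟩
  have hab' : closure {(a : G ⧸ N), (b : G ⧸ N)} = ⊤ := by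
    rw [closure_pair_mk_eq_top_iff, hab, top_sup_eq]
  obtain ⟨d, hd⟩ := ((Nat.bijective_iff_injective_and_card _).mpr
    ⟨ev_injective hab', hcard⟩).2 (⟨coord N κ a, coord_mem hκ a⟩, ⟨coord N κ b, coord_mem hκ b⟩)
  exact cocycle_apply_ne_of_closure_eq_top hκ hN hab d.2
    (congrArg (fun x => (x.1 : G)) hd) (congrArg (fun x => (x.2 : G)) hd)

end Values

section Complemented

variable {G : Type*} [Group G] {N : Subgroup G} [N.Normal] [IsMulCommutative N] {κ : G ⧸ N →* G}
  (hmin : ∀ K : Subgroup G, K.Normal → K ≤ N → K = ⊥ ∨ K = N)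
  (hκ : ∀ q, ((κ q : G) : G ⧸ N) = q)
include hmin hκ

lemma adj_of_forall_cocycle_apply_ne {g h : G} (hgh : (genGraph (G ⧸ N) 2).Adj g h)
    (hcoc : ∀ d ∈ cocycles N κ, d g = coord N κ g → d h ≠ coord N κ h) :
    (genGraph G 2).Adj g h :=
  genGraph_two_adj_of_closure (fun h' => (genGraph_two_adj_iff.mp hgh).1 (by rw [h']))
    (closure_eq_top_of_forall_cocycle_apply_ne hκ hmin (closure_pair_eq_top_of_adj hgh) hcoc)

/-- An element whose coordinate is not a cocycle value lies in no complement of `N`. -/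
lemma adj_of_coord_not_mem_cocycleValues {g h : G} (hgh : (genGraph (G ⧸ N) 2).Adj g h)
    (hg : coord N κ g ∉ cocycleValues N κ g) : (genGraph G 2).Adj g h :=
  adj_of_forall_cocycle_apply_ne hmin hκ hgh fun d hd hdg _ =>
    hg (mem_cocycleValues.mpr ⟨d, hd, hdg⟩)

lemma adj_of_not_mem_vanishingValues {g h : G} (hgh : (genGraph (G ⧸ N) 2).Adj g h)
    {d : G ⧸ N → G} (hd : d ∈ cocycles N κ) (hdg : d g = coord N κ g)
    (hh : coord N κ h * (d h)⁻¹ ∉ vanishingValues N κ g h) : (genGraph G 2).Adj g h :=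
  adj_of_forall_cocycle_apply_ne hmin hκ hgh fun c hc hcg hch =>
    hh (mem_vanishingValues.mpr ⟨c * d⁻¹, mul_mem hc (inv_mem hd), by simp [hcg, hdg],
      by simp [hch]⟩)

lemma reachable_of_coord_not_mem_cocycleValues {X W : G} (hX : NonIsolated G 2 X)
    (hXcyc : zpowers (X : G ⧸ N) ≠ ⊤) (hXW : (X : G ⧸ N) = W)
    (hW : coord N κ W ∉ cocycleValues N κ W) : (genGraph G 2).Reachable X W := by
  obtain ⟨P, hP⟩ := hX
  have hWP : (genGraph (G ⧸ N) 2).Adj W P := by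
    refine genGraph_two_adj_of_closure (fun h => hXcyc ?_)
      (hXW ▸ closure_pair_mk_eq_top_of_adj N hP)
    rw [← closure_pair_mk_eq_top_of_adj N hP, hXW, h, Set.pair_eq_singleton, zpowers_eq_closure]
  exact hP.reachable.trans (adj_of_coord_not_mem_cocycleValues hmin hκ hWP hW).symm.reachable

/-- Either the cocycles through `X` do not exhaust the possible values at `y`, or by counting the
coset of `X` contains an element lying in no complement. -/
lemma exists_reachable_lift_of_adj [Finite G] (hN : N ≠ ⊥) {X : G} (hX : NonIsolated G 2 X)
    (hXcyc : zpowers (X : G ⧸ N) ≠ ⊤) {y : G ⧸ N} (hXy : (genGraph (G ⧸ N) 2).Adj X y) :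
    ∃ Y : G, (Y : G ⧸ N) = y ∧ NonIsolated G 2 Y ∧ (genGraph G 2).Reachable X Y := by
  by_cases hz : N ≤ cocycleValues N κ X
  · obtain ⟨P, hP⟩ := hX
    obtain ⟨ξ, hξN, hξ⟩ := SetLike.not_le_iff_exists.mp <| not_le_vanishingValues hκ hN
      (closure_pair_eq_top_of_adj hP) (closure_pair_eq_top_of_adj hXy) hz
    obtain ⟨d, hd, hdX⟩ := mem_cocycleValues.mp (hz (coord_mem hκ X))
    have hsN := mul_mem hξN (cocycle_mem hd y)
    have hY := mk_mul_section hκ hsN y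
    have hadj := adj_of_not_mem_vanishingValues hmin hκ (hY ▸ hXy) hd hdX
      (by rwa [hY, coord_mul_section hκ hsN, mul_inv_cancel_right])
    exact ⟨_, hY, ⟨X, hadj.symm⟩, hadj.reachable⟩
  · obtain ⟨W, hW, hWc⟩ := exists_coord_not_mem_cocycleValues hκ hz
    have hadj := adj_of_coord_not_mem_cocycleValues hmin hκ ((hκ y).symm ▸ hW ▸ hXy) hWc
    exact ⟨κ y, hκ y, ⟨W, hadj.symm⟩,
      (reachable_of_coord_not_mem_cocycleValues hmin hκ hX hXcyc hW.symm hWc).trans hadj.reachable⟩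

lemma reachable_of_not_le_cocycleValues {u v : G} (huv : (u : G ⧸ N) = v) {y : G ⧸ N}
    (huy : (genGraph (G ⧸ N) 2).Adj u y) (hy : ¬ N ≤ cocycleValues N κ y) :
    (genGraph G 2).Reachable u v := by
  obtain ⟨W, hW, hWc⟩ := exists_coord_not_mem_cocycleValues hκ hy
  have hWu : (genGraph (G ⧸ N) 2).Adj W u := hW ▸ huy.symm
  exact (adj_of_coord_not_mem_cocycleValues hmin hκ hWu hWc).symm.reachable.trans
    (adj_of_coord_not_mem_cocycleValues hmin hκ (huv ▸ hWu) hWc).reachable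

/-- The cocycles through `u` and `v` differ at `x` by an element of `vanishingValues N κ u x`, so
`u` and `v` have the same neighbours over `x`. -/
lemma reachable_of_mem_vanishingValues {u v : G} (huv : (u : G ⧸ N) = v) {x : G ⧸ N}
    (hux : (genGraph (G ⧸ N) 2).Adj u x) (hx : ¬ N ≤ vanishingValues N κ u x)
    {du dv : G ⧸ N → G} (hdu : du ∈ cocycles N κ) (hdv : dv ∈ cocycles N κ)
    (hduu : du u = coord N κ u) (hdvv : dv v = coord N κ v)
    (hτ : dv x * (du x)⁻¹ ∈ vanishingValues N κ u x) : (genGraph G 2).Reachable u v := by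
  obtain ⟨ξ, hξN, hξ⟩ := SetLike.not_le_iff_exists.mp hx
  have hsN := mul_mem hξN (cocycle_mem hdu x)
  have hX := mk_mul_section hκ hsN x
  have hcX := coord_mul_section hκ hsN x
  have hvX := adj_of_not_mem_vanishingValues hmin hκ (hX ▸ huv ▸ hux) hdv hdvv <| by
    rw [hX, hcX, ← huv, mul_assoc]
    exact fun h => hξ ((mul_mem_cancel_right (by simpa using inv_mem hτ)).mp h)
  exact (adj_of_not_mem_vanishingValues hmin hκ (by rwa [hX]) hdu hduu
    (by rwa [hX, hcX, mul_inv_cancel_right])).reachable.trans hvX.symm.reachable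

/-- The path `u - X - W - v`, where `X` lies in the complement through `v`. -/
lemma reachable_of_not_mem_vanishingValues {u v : G} (huv : (u : G ⧸ N) = v) {x w : G ⧸ N}
    (hux : (genGraph (G ⧸ N) 2).Adj u x) (huw : (genGraph (G ⧸ N) 2).Adj u w)
    (hxw : (genGraph (G ⧸ N) 2).Adj x w)
    (hxw' : ¬ N ≤ vanishingValues N κ x w) (huw' : ¬ N ≤ vanishingValues N κ u w)
    {du dv : G ⧸ N → G} (hdu : du ∈ cocycles N κ) (hdv : dv ∈ cocycles N κ)
    (hduu : du u = coord N κ u) (hdvv : dv v = coord N κ v)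
    (hτ : dv x * (du x)⁻¹ ∉ vanishingValues N κ u x) : (genGraph G 2).Reachable u v := by
  obtain ⟨ζ, hζN, hζ⟩ := Set.not_subset.mp
    (mt SubgroupClass.subset_union.mp (not_or_intro hxw' huw'))
  obtain ⟨hζx, hζu⟩ := not_or.mp hζ
  have hX := mk_mul_section hκ (cocycle_mem hdv x) x
  have hcX := coord_mul_section hκ (cocycle_mem hdv x) x
  have hsN := mul_mem hζN (cocycle_mem hdv w)
  have hW := mk_mul_section hκ hsN w
  have hcW := coord_mul_section hκ hsN w
  have huX := adj_of_not_mem_vanishingValues hmin hκ (hX ▸ hux) hdu hduu (by rwa [hX, hcX])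
  have hXW := adj_of_not_mem_vanishingValues hmin hκ (hX ▸ hW ▸ hxw) hdv (by rw [hX, hcX])
    (by rwa [hX, hW, hcW, mul_inv_cancel_right])
  have hvW := adj_of_not_mem_vanishingValues hmin hκ (hW ▸ huv ▸ huw) hdv hdvv
    (by rwa [hW, hcW, mul_inv_cancel_right, ← huv])
  exact huX.reachable.trans (hXW.reachable.trans hvW.symm.reachable)

/-- Let `p` be a neighbour of `u`. If the coset of `u` or of `p` contains an element lying in no
complement, it yields a short path; otherwise `u` and `v` have a common neighbour in the coset of
`p`, or are joined through the cosets of `p` and of `u * p`. -/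
lemma reachable_of_mk_eq [Finite G] (hN : N ≠ ⊥) (hQ : ¬ IsCyclic (G ⧸ N)) {u v : G}
    (hu : NonIsolated G 2 u) (hv : NonIsolated G 2 v) (huv : (u : G ⧸ N) = v) :
    (genGraph G 2).Reachable u v := by
  have hcyc (q : G ⧸ N) : zpowers q ≠ ⊤ := fun h =>
    hQ (isCyclic_iff_exists_zpowers_eq_top.mpr ⟨q, h⟩)
  obtain ⟨p, hp⟩ := id hu
  have hab := closure_pair_eq_top_of_adj hp
  have hup := closure_pair_mk_eq_top_of_adj N hp
  obtain ⟨hne, hu1, hp1⟩ := closure_pair_ne_of_not_isCyclic hQ hup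
  have hux := genGraph_two_adj_of_closure hne hup
  by_cases hz : N ≤ cocycleValues N κ u
  swap
  · obtain ⟨W, hW, hWc⟩ := exists_coord_not_mem_cocycleValues hκ hz
    exact (reachable_of_coord_not_mem_cocycleValues hmin hκ hu (hcyc _) hW.symm hWc).trans
      (reachable_of_coord_not_mem_cocycleValues hmin hκ hv (hcyc _) (huv ▸ hW.symm) hWc).symm
  by_cases hx : N ≤ cocycleValues N κ p
  swap
  · exact reachable_of_not_le_cocycleValues hmin hκ huv hux hx
  obtain ⟨du, hdu, hduu⟩ := mem_cocycleValues.mp (hz (coord_mem hκ u))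
  obtain ⟨dv, hdv, hdvv⟩ := mem_cocycleValues.mp (huv ▸ hz (coord_mem hκ v))
  by_cases hτ : dv p * (du p)⁻¹ ∈ vanishingValues N κ u p
  · exact reachable_of_mem_vanishingValues hmin hκ huv hux
      (not_le_vanishingValues hκ hN hab hup hz) hdu hdv hduu hdvv hτ
  · have huw := genGraph_two_adj_of_closure (left_ne_mul.mpr hp1)
      ((closure_pair_mul_right_eq _ _).trans hup)
    have hxw := genGraph_two_adj_of_closure (right_ne_mul.mpr hu1)
      ((closure_pair_mul_left_eq _ _).trans hup)
    exact reachable_of_not_mem_vanishingValues hmin hκ huv hux huw hxw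
      (not_le_vanishingValues hκ hN hab (closure_pair_eq_top_of_adj hxw) hx)
      (not_le_vanishingValues hκ hN hab (closure_pair_eq_top_of_adj huw) hz)
      hdu hdv hduu hdvv hτ

end Complemented

section Lifting

variable {G : Type*} [Group G] {N : Subgroup G} [N.Normal] [IsMulCommutative N]
  (hmin : ∀ K : Subgroup G, K.Normal → K ≤ N → K = ⊥ ∨ K = N)
include hmin

lemma deltaGraph_preconnected_of_isCyclic_quotient [Finite G] [Nontrivial (G ⧸ N)]
    [IsCyclic (G ⧸ N)] (hN : N ≠ ⊥) {κ : G ⧸ N →* G} (hκ : ∀ q, ((κ q : G) : G ⧸ N) = q) :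
    (deltaGraph G 2).Preconnected := by
  obtain ⟨q₀, hq₀⟩ := isCyclic_iff_exists_zpowers_eq_top.mp ‹_›
  have hgen {a b : G ⧸ N} (ha : zpowers a = ⊤) : closure {b, a} = ⊤ :=
    top_le_iff.mp (ha ▸ (zpowers_eq_closure a).symm ▸ closure_mono (by simp))
  obtain ⟨m, hmN, hm1⟩ := (bot_or_exists_ne_one N).resolve_left hN
  have hm : ((m : G) : G ⧸ N) = 1 := (QuotientGroup.eq_one_iff _).mpr hmN
  -- no cocycle has a value other than `1` at `1`, so `m` lies in no complement
  have hadj {a : G} (ha : zpowers (a : G ⧸ N) = ⊤) : (genGraph G 2).Adj m a := by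
    refine adj_of_coord_not_mem_cocycleValues hmin hκ (genGraph_two_adj_of_closure ?_ ?_) ?_
    · rw [hm]
      rintro h
      exact bot_ne_top (by rwa [← h, zpowers_one_eq_bot] at ha)
    · rw [hm]; exact hgen ha
    · rw [hm, coord_of_mem hκ hmN, mem_cocycleValues]
      rintro ⟨d, hd, hd1⟩
      exact hm1 (hd1 ▸ cocycle_apply_one hd)
  have hreach {a : G} (ha : NonIsolated G 2 a) : (genGraph G 2).Reachable a m := by
    by_cases hgen_a : zpowers (a : G ⧸ N) = ⊤
    · exact (hadj hgen_a).symm.reachable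
    · obtain ⟨Y, hY, -, haY⟩ := exists_reachable_lift_of_adj hmin hκ hN ha hgen_a
        (y := q₀) (genGraph_two_adj_of_closure (fun h => hgen_a (h ▸ hq₀)) (hgen hq₀))
      exact haY.trans (hadj (hY ▸ hq₀)).symm.reachable
  exact deltaGraph_preconnected_of_reachable fun u v hu hv => (hreach hu).trans (hreach hv).symm

lemma deltaGraph_preconnected_of_not_isCyclic_quotient [Finite G] (hN : N ≠ ⊥)
    (hQ : ¬ IsCyclic (G ⧸ N)) {κ : G ⧸ N →* G} (hκ : ∀ q, ((κ q : G) : G ⧸ N) = q)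
    (hpre : (deltaGraph (G ⧸ N) 2).Preconnected) : (deltaGraph G 2).Preconnected := by
  have : Nontrivial (G ⧸ N) := not_subsingleton_iff_nontrivial.mp fun _ => hQ inferInstance
  refine deltaGraph_preconnected_of_reachable fun u v hu hv => ?_
  obtain ⟨X, hXv, hX, huX⟩ := (genGraph_reachable_of_deltaGraph_reachable
    (hpre ⟨_, nonIsolated_mk N hu⟩ ⟨_, nonIsolated_mk N hv⟩)).exists_lift
    (fun g : G => (g : G ⧸ N)) (NonIsolated G 2)
    (fun X hX _ hXy => exists_reachable_lift_of_adj hmin hκ hN hX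
      (fun h => hQ (isCyclic_iff_exists_zpowers_eq_top.mpr ⟨_, h⟩)) hXy) hu
  exact huX.trans (reachable_of_mk_eq hmin hκ hN hQ hX hv hXv)

/-- Without a complement, every generating pair of `G/N` lifts to generating pairs of `G`. -/
lemma deltaGraph_preconnected_of_forall_sup_ne_top [Nontrivial (G ⧸ N)]
    (hc : ∀ K : Subgroup G, K ⊓ N = ⊥ → K ⊔ N ≠ ⊤)
    (hpre : (deltaGraph (G ⧸ N) 2).Preconnected) : (deltaGraph G 2).Preconnected := by
  have hadj {g h : G} (hgh : (genGraph (G ⧸ N) 2).Adj g h) : (genGraph G 2).Adj g h := by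
    have hsup := (closure_pair_mk_eq_top_iff N g h).mp (closure_pair_eq_top_of_adj hgh)
    exact genGraph_two_adj_of_closure (fun h' => (genGraph_two_adj_iff.mp hgh).1 (by rw [h']))
      ((eq_top_or_inf_eq_bot_of_sup_eq_top N hmin hsup).resolve_right (hc _ · hsup))
  have hlift {X : G} {y : G ⧸ N} (hXy : (genGraph (G ⧸ N) 2).Adj X y) :
      ∃ Y : G, (Y : G ⧸ N) = y ∧ (genGraph G 2).Adj X Y := by
    obtain ⟨Y, rfl⟩ := QuotientGroup.mk_surjective y
    exact ⟨Y, rfl, hadj hXy⟩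
  refine deltaGraph_preconnected_of_reachable fun u v hu hv => ?_
  obtain ⟨X, hXv, -, huX⟩ := (genGraph_reachable_of_deltaGraph_reachable
    (hpre ⟨_, nonIsolated_mk N hu⟩ ⟨_, nonIsolated_mk N hv⟩)).exists_lift
    (fun g : G => (g : G ⧸ N)) (fun _ => True)
    (fun _ _ _ hXy => (hlift hXy).imp fun _ ⟨hY, hadj⟩ => ⟨hY, trivial, hadj.reachable⟩) trivial
  obtain ⟨y, hvy⟩ := nonIsolated_mk N hv
  obtain ⟨Y, hY, hvY⟩ := hlift hvy
  exact huX.trans ((hadj (hY ▸ hXv ▸ hvy)).reachable.trans hvY.symm.reachable)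

theorem deltaGraph_preconnected_of_quotient [Finite G] (hN : N ≠ ⊥)
    (hpre : (deltaGraph (G ⧸ N) 2).Preconnected) : (deltaGraph G 2).Preconnected := by
  by_cases hNtop : N = ⊤
  · have := isCyclic_of_eq_top N hmin hNtop
    exact deltaGraph_preconnected_of_isCyclic
  have : Nontrivial (G ⧸ N) := QuotientGroup.nontrivial_iff.mpr hNtop
  by_cases hc : ∀ K : Subgroup G, K ⊓ N = ⊥ → K ⊔ N ≠ ⊤
  · exact deltaGraph_preconnected_of_forall_sup_ne_top hmin hc hpre
  push Not at hc
  obtain ⟨K, h₁, h₂⟩ := hc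
  obtain ⟨κ, hκ, -⟩ := exists_section_of_isComplement N h₁ h₂
  by_cases hQ : IsCyclic (G ⧸ N)
  · exact deltaGraph_preconnected_of_isCyclic_quotient hmin hN hκ
  · exact deltaGraph_preconnected_of_not_isCyclic_quotient hmin hN hQ hκ hpre

end Lifting

lemma exists_minimal_normal_isMulCommutative {G : Type*} [Group G] [Finite G] {R : Subgroup G}
    (hR : R.Normal) (hRs : Group.IsSolvable R) (hR1 : R ≠ ⊥) :
    ∃ N : Subgroup G, N.Normal ∧ IsMulCommutative N ∧ N ≠ ⊥ ∧
      ∀ K : Subgroup G, K.Normal → K ≤ N → K = ⊥ ∨ K = N := by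
  obtain ⟨N, ⟨hNn, hNs, hN1⟩, hNmin⟩ := (wellFounded_lt (α := Subgroup G)).has_min
    {K | K.Normal ∧ Group.IsSolvable K ∧ K ≠ ⊥} ⟨R, hR, hRs, hR1⟩
  have hmin (K : Subgroup G) (hK : K.Normal) (hKN : K ≤ N) : K = ⊥ ∨ K = N :=
    or_iff_not_imp_left.mpr fun hK1 => hKN.eq_or_lt.resolve_right fun hlt =>
      hNmin K ⟨hK, Group.isSolvable_of_isSolvable_injective (inclusion_injective hKN), hK1⟩ hlt
  have : Nontrivial N := (Subgroup.nontrivial_iff_ne_bot N).mpr hN1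
  have hlt : ⁅N, N⁆ < N := by
    rw [← N.range_subtype, MonoidHom.range_eq_map, ← map_commutator, map_subtype_lt_map_subtype]
    exact Group.IsSolvable.commutator_lt_top_of_nontrivial N
  have hcomm := (hmin _ (commutator_normal N N) hlt.le).resolve_right hlt.ne
  exact ⟨N, hNn, commutator_self_eq_bot_iff.mp hcomm, hN1, hmin⟩

lemma deltaGraph_preconnected_of_forall_isSolvable_eq_bot
    (h : ∀ (G : Type) [Group G] [Finite G],
      (∀ N : Subgroup G, N.Normal → Group.IsSolvable N → N = ⊥) → (deltaGraph G 2).Preconnected)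
    (G : Type) [Group G] [Finite G] : (deltaGraph G 2).Preconnected := by
  induction hn : Nat.card G using Nat.strong_induction_on generalizing G with
  | _ n ih =>
    by_cases hrad : ∀ N : Subgroup G, N.Normal → Group.IsSolvable N → N = ⊥
    · exact h G hrad
    push Not at hrad
    obtain ⟨R, hR, hRs, hR1⟩ := hrad
    obtain ⟨N, hNn, hNc, hN1, hmin⟩ := exists_minimal_normal_isMulCommutative hR hRs hR1
    refine deltaGraph_preconnected_of_quotient hmin hN1 (ih _ ?_ (G ⧸ N) rfl)
    rw [← hn, card_eq_card_quotient_mul_card_subgroup N]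
    exact lt_mul_of_one_lt_right Nat.card_pos ((one_lt_card_iff_ne_bot N).mpr hN1)

theorem stmt9 :
    (∀ (G : Type) [Group G] [Finite G], (deltaGraph G 2).Preconnected) ↔
    (∀ (G : Type) [Group G] [Finite G],
      (∀ N : Subgroup G, N.Normal → IsSolvable N → N = ⊥) →
      (deltaGraph G 2).Preconnected) :=
  ⟨fun h G _ _ _ => h G, deltaGraph_preconnected_of_forall_isSolvable_eq_bot⟩
end
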